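/- With J(r, cos θ) = −r^n [n cos θ − (n−4)(cos θ) r^4 − (n+2) r^2 + (n−2) r^6]/(1 − 2 (cos θ) r^2 + r^4)^{n/2+1} and J(1, cos θ) = 2/(2^n (sin^2(θ/2))^{n/2}), the uniform bound |J(r, cos θ)|/J(1, cos θ) ≤ n − 1 holds for all 0 ≤ r < 1 and 0 < θ < π. -/
import Mathlib


open Filter

/-- The kernel `J(r,t) = -rⁿ [nt - (n-4)tr⁴ - (n+2)r² + (n-2)r⁶]/(1 - 2tr² + r⁴)^{n/2+1}`. -/
noncomputable def Jker (n : ℕ) (r t : ℝ) : ℝ :=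
  -(r ^ n * (((n : ℝ) * t - ((n : ℝ) - 4) * t * r ^ 4 - ((n : ℝ) + 2) * r ^ 2
      + ((n : ℝ) - 2) * r ^ 6) / (1 - 2 * t * r ^ 2 + r ^ 4) ^ ((n : ℝ) / 2 + 1)))

/-- The boundary value `J(1, cos θ) = 2/(2ⁿ (sin²(θ/2))^{n/2})`. -/
noncomputable def Jker1 (n : ℕ) (θ : ℝ) : ℝ :=
  2 / (2 ^ n * (Real.sin (θ / 2) ^ 2) ^ ((n : ℝ) / 2))

lemma key_ineq (n : ℕ) (hn : 2 ≤ n) (x s : ℝ) (hx0 : 0 ≤ x) (hx1 : x ≤ 1)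
    (hs0 : 0 ≤ s) (hs1 : s ≤ 1) :
    |(n:ℝ)*(1-2*s) - ((n:ℝ)-4)*((1-2*s))*x^2 - ((n:ℝ)+2)*x + ((n:ℝ)-2)*x^3|
      ≤ 2*((n:ℝ)-1)*((1-x)^2 + 4*x*s) := by
  have hn' : (2:ℝ) ≤ (n:ℝ) := by exact_mod_cast hn
  rw [abs_le]
  constructor
  · nlinarith [mul_nonneg (sub_nonneg.2 hs1) (mul_nonneg (mul_nonneg (sq_nonneg (1-x)) (by linarith : (0:ℝ) ≤ (n:ℝ)-2)) (sub_nonneg.2 hx1)),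
      mul_nonneg hs0 (mul_nonneg (by linarith : (0:ℝ) ≤ (n:ℝ)-2) (pow_nonneg (by linarith : (0:ℝ) ≤ 1+x) 3)),
      mul_nonneg (sub_nonneg.2 hs1) (sq_nonneg (1-x)), sq_nonneg (1-x)]
  · nlinarith [mul_nonneg (mul_nonneg hs0 hx0) (by linarith : (0:ℝ) ≤ (n:ℝ)-1),
      mul_nonneg hs0 (mul_nonneg (by linarith : (0:ℝ) ≤ (n:ℝ)) (mul_nonneg (sub_nonneg.2 hx1) (by linarith : (0:ℝ) ≤ 1+x))),
      mul_nonneg hs0 (mul_nonneg hx0 hx0),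
      mul_nonneg (mul_nonneg (by linarith : (0:ℝ) ≤ (n:ℝ)-2) (sub_nonneg.2 hx1)) (sq_nonneg (1-x))]

/-- **Uniform bound** `|J(r, cos θ)| / J(1, cos θ) ≤ n - 1` for all `0 ≤ r < 1`, `0 < θ < π`. -/
theorem Jker_uniform_bound
    (n : ℕ) (hn : 2 ≤ n) (r θ : ℝ) (hr : 0 ≤ r) (hr' : r < 1)
    (hθ : 0 < θ) (hθ' : θ < Real.pi) :
    |Jker n r (Real.cos θ)| / Jker1 n θ ≤ (n : ℝ) - 1 := by
  have hn' : (2:ℝ) ≤ (n:ℝ) := by exact_mod_cast hn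
  set s : ℝ := Real.sin (θ / 2) ^ 2 with hs_def
  have hsin : 0 < Real.sin (θ / 2) := Real.sin_pos_of_pos_of_lt_pi (by linarith) (by linarith)
  have hs0 : 0 < s := by positivity
  have hs1 : s ≤ 1 := by
    have := Real.sin_le_one (θ / 2); nlinarith
  have ht : Real.cos θ = 1 - 2 * s := by
    have h := Real.sin_sq_eq_half_sub (θ / 2)
    rw [show 2 * (θ / 2) = θ by ring] at h
    rw [hs_def, h]; ring
  set t : ℝ := Real.cos θ
  have hx0 : (0:ℝ) ≤ r ^ 2 := by positivity
  have hx1 : r ^ 2 ≤ 1 := by nlinarith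
  -- denominator
  have hD : 1 - 2 * t * r ^ 2 + r ^ 4 = (1 - r ^ 2) ^ 2 + 4 * r ^ 2 * s := by
    rw [ht]; ring
  set D : ℝ := 1 - 2 * t * r ^ 2 + r ^ 4 with hD_def
  have hDpos : 0 < D := by rw [hD]; nlinarith [sq_nonneg (1 - r^2)]
  -- numerator bound
  set N : ℝ := (n:ℝ) * t - ((n:ℝ) - 4) * t * r ^ 4 - ((n:ℝ) + 2) * r ^ 2
      + ((n:ℝ) - 2) * r ^ 6 with hN_def
  have hNbound : |N| ≤ 2 * ((n:ℝ) - 1) * D := by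
    have := key_ineq n hn (r ^ 2) s hx0 hx1 hs0.le hs1
    have hNeq : N = (n:ℝ)*(1-2*s) - ((n:ℝ)-4)*((1-2*s))*(r^2)^2 - ((n:ℝ)+2)*(r^2)
        + ((n:ℝ)-2)*(r^2)^3 := by rw [hN_def, ht]; try ring
    rw [hNeq]
    calc _ ≤ 2*((n:ℝ)-1)*((1-r^2)^2 + 4*(r^2)*s) := this
      _ = 2 * ((n:ℝ) - 1) * D := by rw [hD]
  -- rpow facts
  set p : ℝ := (n:ℝ) / 2 with hp_def
  have hp0 : 0 ≤ p := by positivity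
  have hDp_pos : (0:ℝ) < D ^ (p + 1) := Real.rpow_pos_of_pos hDpos _
  have hDp_split : D ^ (p + 1) = D ^ p * D := by
    rw [Real.rpow_add hDpos, Real.rpow_one]
  have h4rs : (4 * r ^ 2 * s) ^ p = 2 ^ n * r ^ n * s ^ p := by
    have h1 : (4 * r ^ 2 * s : ℝ) = (2 * r) ^ 2 * s := by ring
    rw [h1, Real.mul_rpow (by positivity) hs0.le]
    congr 1
    have h2 : ((2 * r) ^ 2 : ℝ) ^ p = (2 * r) ^ n := by
      rw [← Real.rpow_natCast (2 * r) 2, ← Real.rpow_mul (by positivity),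
        show ((2:ℕ):ℝ) * p = (n:ℝ) by rw [hp_def]; push_cast; ring, Real.rpow_natCast]
    rw [h2, mul_pow]
  have hDp_ge : 2 ^ n * r ^ n * s ^ p ≤ D ^ p := by
    rw [← h4rs]
    exact Real.rpow_le_rpow (by positivity) (by rw [hD]; nlinarith [sq_nonneg (1 - r^2)]) hp0
  -- express |Jker|
  have hJabs : |Jker n r t| = r ^ n * |N| / D ^ (p + 1) := by
    rw [Jker, abs_neg, abs_mul, abs_div, abs_of_nonneg (pow_nonneg hr n),
      abs_of_pos hDp_pos, mul_div_assoc]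
  have hJ1 : Jker1 n θ = 2 / (2 ^ n * s ^ p) := rfl
  have hspos : (0:ℝ) < s ^ p := Real.rpow_pos_of_pos hs0 _
  have hJ1pos : 0 < Jker1 n θ := by rw [hJ1]; positivity
  -- main chain
  have hmain : r ^ n * |N| * (2 ^ n * s ^ p) ≤ 2 * ((n:ℝ) - 1) * D ^ (p + 1) := by
    calc r ^ n * |N| * (2 ^ n * s ^ p)
        = (2 ^ n * r ^ n * s ^ p) * |N| := by ring
      _ ≤ D ^ p * (2 * ((n:ℝ) - 1) * D) := by
          apply mul_le_mul hDp_ge hNbound (abs_nonneg _) (Real.rpow_nonneg hDpos.le _)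
      _ = 2 * ((n:ℝ) - 1) * D ^ (p + 1) := by rw [hDp_split]; ring
  have hQ : (0:ℝ) < 2 ^ n * s ^ p := by positivity
  rw [hJabs, hJ1, div_le_iff₀ (by positivity : (0:ℝ) < 2 / (2 ^ n * s ^ p)),
    div_le_iff₀ hDp_pos,
    show ((n:ℝ) - 1) * (2 / (2 ^ n * s ^ p)) * D ^ (p + 1)
      = 2 * ((n:ℝ) - 1) * D ^ (p + 1) / (2 ^ n * s ^ p) by ring,
    le_div_iff₀ hQ]
  linarith [hmain]
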